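/- Let n ≥ 1 and k ≥ 1 be integers and let L, t₁,…,tₙ be complex numbers. Then (1/(2πi)) ∮_{|w|=1} e^{Lw + t₁/w + t₂/w² + ⋯ + tₙ/wⁿ} / w^{2k} dw = Σ_{m₂,…,mₙ ≥ 0} ( ∏_{j=2}^{n} t_j^{m_j}/m_j! ) · L^{ν} · Σ_{r≥0} (L·t₁)^{r} / ( r!·(ν+r)! ), where ν = ν(m₂,…,mₙ) = Σ_{j=2}^{n} j·m_j + 2k − 1 and the right-hand side converges absolutely; when L and t₁ are positive reals, the factor L^{ν}·Σ_{r≥0}(L·t₁)^{r}/(r!(ν+r)!) equals (L/t₁)^{ν/2}·I_ν(2√(L·t₁)). -/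

import Mathlib

/-! Write the exponent as `∑ⱼ cⱼ w^{dⱼ}` with `c = (L, t₁, …, tₙ)` and `d = (1, -1, …, -n)`.
Multiplying the exponential series of the summands gives an absolutely convergent Laurent
series `∑ₘ (∏ⱼ cⱼ^{mⱼ}/mⱼ!) w^{∑ⱼ dⱼ mⱼ - 2k}`, which may be integrated term by term on the unit
circle. Only the terms with exponent `-1` survive; these are exactly the multi-indices in which
the power of `L` equals `ν + r`, where `r` is the power of `t₁`, and collecting them gives the
double series. The Bessel form is the substitution `x = 2√(L t₁)` in the series of `I_ν`. -/

open Finset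

noncomputable section

/-- The modified Bessel function of the first kind of integer order,
`I_m(x) = (x/2)^m Σ_{j≥0} (x/2)^{2j}/(j!(m+j)!)`. -/
def besselI (m : ℕ) (x : ℝ) : ℝ :=
  (x / 2) ^ m * ∑' j : ℕ, (x / 2) ^ (2 * j) / (j.factorial * (m + j).factorial)

/-- The index `ν(m₂,…,mₙ) = Σ_{j=2}^n j·m_j + 2k − 1` (the tuple `(m₂,…,mₙ)` is realised
as `m : Fin nn → ℕ`, where `n = nn + 1` and `m_(j+2) = m j`). -/
def nuIdx (k nn : ℕ) (m : Fin nn → ℕ) : ℕ := (∑ j : Fin nn, ((j : ℕ) + 2) * m j) + 2 * k - 1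

section ProdPi

variable {R β : Type*} [NormedCommRing R]

theorem summable_norm_prod_pi {M : ℕ} {f : Fin M → β → R}
    (hf : ∀ j, Summable fun b => ‖f j b‖) :
    Summable fun m : Fin M → β => ‖∏ j, f j (m j)‖ := by
  induction M with
  | zero => exact Summable.of_finite
  | succ M ih =>
    rw [← (Fin.consEquiv fun _ => β).summable_iff]
    simpa [Function.comp_def, Fin.prod_univ_succ] using
      (hf 0).mul_norm (ih fun j => hf j.succ)

theorem tsum_prod_pi [CompleteSpace R] {M : ℕ} {f : Fin M → β → R}
    (hf : ∀ j, Summable fun b => ‖f j b‖) :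
    ∑' m : Fin M → β, ∏ j, f j (m j) = ∏ j, ∑' b, f j b := by
  induction M with
  | zero => simp
  | succ M ih =>
    rw [Fin.prod_univ_succ, ← ih fun j => hf j.succ,
      tsum_mul_tsum_of_summable_norm (hf 0) (summable_norm_prod_pi fun j => hf j.succ),
      ← (Fin.consEquiv fun _ => β).tsum_eq]
    simp [Fin.prod_univ_succ]

end ProdPi

def expCoeff {M : ℕ} (c : Fin M → ℂ) (m : Fin M → ℕ) : ℂ :=
  ∏ j, c j ^ m j / ((m j).factorial : ℂ)

theorem Complex.summable_norm_pow_div_factorial (z : ℂ) :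
    Summable fun n : ℕ => ‖z ^ n / (n.factorial : ℂ)‖ := by
  simpa [norm_div, norm_pow] using Real.summable_pow_div_factorial ‖z‖

theorem summable_norm_expCoeff {M : ℕ} (c : Fin M → ℂ) :
    Summable fun m => ‖expCoeff c m‖ :=
  (summable_norm_prod_pi fun j => Complex.summable_norm_pow_div_factorial (c j) :)

theorem Complex.exp_sum_eq_tsum_expCoeff {M : ℕ} (c : Fin M → ℂ) :
    Complex.exp (∑ j, c j) = ∑' m, expCoeff c m := by
  unfold expCoeff
  rw [Complex.exp_sum, tsum_prod_pi fun j => Complex.summable_norm_pow_div_factorial (c j)]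
  simp only [Complex.exp_eq_exp_ℂ, NormedSpace.exp_eq_tsum_div]

theorem Finset.prod_zpow_eq_zpow_sum₀ {ι G₀ : Type*} [CommGroupWithZero G₀] {a : G₀} (ha : a ≠ 0)
    (s : Finset ι) (f : ι → ℤ) : ∏ i ∈ s, a ^ f i = a ^ ∑ i ∈ s, f i := by
  induction s using Finset.cons_induction with
  | empty => simp
  | cons i s hi ih => rw [prod_cons, sum_cons, zpow_add₀ ha, ih]

theorem Complex.exp_sum_mul_zpow_eq_tsum {M : ℕ} (c : Fin M → ℂ) (d : Fin M → ℤ) {w : ℂ}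
    (hw : w ≠ 0) :
    Complex.exp (∑ j, c j * w ^ d j) = ∑' m, expCoeff c m * w ^ ∑ j, d j * m j := by
  rw [Complex.exp_sum_eq_tsum_expCoeff]
  refine tsum_congr fun m => ?_
  simp_rw [expCoeff, mul_pow, ← zpow_natCast, ← zpow_mul, zpow_natCast, mul_div_right_comm]
  rw [prod_mul_distrib, prod_zpow_eq_zpow_sum₀ hw]
open Real Complex in
theorem circleIntegral_tsum_mul_sub_zpow {ι : Type*} [Countable ι] {a : ι → ℂ} {e : ι → ℤ}
    {c : ℂ} {R : ℝ} (hR : 0 < R) (ha : Summable fun i => ‖a i‖ * R ^ e i) :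
    (∮ z in C(c, R), ∑' i, a i * (z - c) ^ e i) =
      2 * π * I * ∑' i, if e i = -1 then a i else 0 := by
  have hterm (i : ι) : (∮ z in C(c, R), a i * (z - c) ^ e i) =
      2 * π * I * if e i = -1 then a i else 0 := by
    rw [circleIntegral.integral_const_mul]
    split_ifs with h
    · simp only [h, zpow_neg_one]
      rw [circleIntegral.integral_sub_inv_of_mem_ball (Metric.mem_ball_self hR), mul_comm]
    · rw [circleIntegral.integral_sub_zpow_of_ne h, mul_zero, mul_zero]
  rw [← tsum_mul_left, ← tsum_congr hterm]
  refine (intervalIntegral.hasSum_integral_of_dominated_convergence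
    (fun i _ => R * (‖a i‖ * R ^ e i)) (fun i => ?_) (fun i => ?_) ?_ ?_ ?_).tsum_eq.symm
  · simp only [deriv_circleMap, circleMap_sub_center, smul_eq_mul]
    have := (continuous_circleMap 0 R).zpow₀ (e i) fun θ => Or.inl (circleMap_ne_center hR.ne')
    exact Continuous.aestronglyMeasurable (by fun_prop)
  · refine .of_forall fun θ _ => ?_
    simp [norm_circleMap_zero, abs_of_pos hR]
  · exact .of_forall fun _ _ => ha.mul_left R
  · exact intervalIntegrable_const
  · refine .of_forall fun θ _ => ?_
    have hs : Summable fun i => a i * (circleMap c R θ - c) ^ e i :=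
      ha.of_norm_bounded fun i => by simp [norm_circleMap_zero, abs_of_pos hR]
    exact hs.hasSum.const_smul _

/-- The `w`-degrees of the monomials `L w, t₁ / w, …, tₙ / wⁿ`, paired with `Fin.cons L t`. -/
def laurentDegree (nn : ℕ) : Fin (nn + 2) → ℤ := Fin.cons 1 fun j => -((j : ℤ) + 1)

theorem sum_laurentDegree_mul_cons_cons {nn : ℕ} (a r : ℕ) (m : Fin nn → ℕ) :
    ∑ j, laurentDegree nn j * (Fin.cons a (Fin.cons r m) : Fin (nn + 2) → ℕ) j =
      a - r - ((∑ j : Fin nn, ((j : ℕ) + 2) * m j : ℕ) : ℤ) := by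
  simp only [Fin.sum_univ_succ, laurentDegree, Fin.cons_zero, Fin.cons_succ, Fin.val_zero,
    Fin.val_succ]
  push_cast
  simp only [add_mul, neg_mul, neg_add, sum_add_distrib, sum_neg_distrib, ← mul_sum]
  ring

theorem laurentDegree_residue_iff {k nn : ℕ} (hk : 1 ≤ k) (a r : ℕ) (m : Fin nn → ℕ) :
    ∑ j, laurentDegree nn j * (Fin.cons a (Fin.cons r m) : Fin (nn + 2) → ℕ) j - 2 * k = -1 ↔
      a = r + nuIdx k nn m := by
  rw [sum_laurentDegree_mul_cons_cons, nuIdx]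
  omega

theorem expCoeff_cons_cons {nn : ℕ} (L : ℂ) (t : Fin (nn + 1) → ℂ) (ν r : ℕ) (m : Fin nn → ℕ) :
    expCoeff (Fin.cons L t) (Fin.cons (r + ν) (Fin.cons r m)) =
      (∏ j, t j.succ ^ m j / ((m j).factorial : ℂ)) * L ^ ν *
        ((L * t 0) ^ r / ((r.factorial : ℂ) * ((ν + r).factorial : ℂ))) := by
  simp only [expCoeff, Fin.prod_univ_succ, Fin.cons_zero, Fin.cons_succ]
  rw [add_comm r ν, pow_add, mul_pow]
  field_simp

theorem sum_laurentDegree_mul_eq {nn : ℕ} (L : ℂ) (t : Fin (nn + 1) → ℂ) {w : ℂ} :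
    ∑ j, (Fin.cons L t : Fin (nn + 2) → ℂ) j * w ^ laurentDegree nn j =
      L * w + ∑ j : Fin (nn + 1), t j / w ^ ((j : ℕ) + 1) := by
  simp only [Fin.sum_univ_succ (n := nn + 1), laurentDegree, Fin.cons_zero, Fin.cons_succ,
    zpow_one, zpow_neg, div_eq_mul_inv]
  norm_cast

theorem exp_div_pow_eq_tsum_expCoeff_mul_zpow (k nn : ℕ) (L : ℂ) (t : Fin (nn + 1) → ℂ) {w : ℂ}
    (hw : w ≠ 0) :
    Complex.exp (L * w + ∑ j : Fin (nn + 1), t j / w ^ ((j : ℕ) + 1)) / w ^ (2 * k) =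
      ∑' m, expCoeff (Fin.cons L t) m * w ^ (∑ j, laurentDegree nn j * m j - 2 * k) := by
  rw [← sum_laurentDegree_mul_eq, Complex.exp_sum_mul_zpow_eq_tsum _ _ hw, ← tsum_div_const]
  refine tsum_congr fun m => ?_
  rw [zpow_sub₀ hw, mul_div_assoc]
  norm_cast

open Real Complex in
theorem circleIntegral_exp_div_pow_eq_tsum (k nn : ℕ) (L : ℂ) (t : Fin (nn + 1) → ℂ) :
    (∮ w in C(0, 1), exp (L * w + ∑ j : Fin (nn + 1), t j / w ^ ((j : ℕ) + 1)) / w ^ (2 * k)) =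
      2 * π * I * ∑' m, if ∑ j, laurentDegree nn j * m j - 2 * k = -1
        then expCoeff (Fin.cons L t) m else 0 := by
  have hexpand : Set.EqOn
      (fun w => exp (L * w + ∑ j : Fin (nn + 1), t j / w ^ ((j : ℕ) + 1)) / w ^ (2 * k))
      (fun w => ∑' m, expCoeff (Fin.cons L t) m *
        (w - 0) ^ (∑ j, laurentDegree nn j * m j - 2 * k)) (Metric.sphere 0 1) := fun w hw => by
    simp only [sub_zero]
    exact exp_div_pow_eq_tsum_expCoeff_mul_zpow k nn L t
      (ne_zero_of_mem_sphere one_ne_zero ⟨w, hw⟩)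
  rw [circleIntegral.integral_congr zero_le_one hexpand, circleIntegral_tsum_mul_sub_zpow one_pos]
  simpa using summable_norm_expCoeff (Fin.cons L t)

/-- The exponents `(r + ν, r, m)` of `(L, t₁, (t₂, …, tₙ))` in a monomial whose
`w`-degree is `-1`. -/
def residueIndex (k nn : ℕ) (p : (Fin nn → ℕ) × ℕ) : Fin (nn + 2) → ℕ :=
  Fin.cons (p.2 + nuIdx k nn p.1) (Fin.cons p.2 p.1)

theorem residueIndex_injective (k nn : ℕ) : Function.Injective (residueIndex k nn) := by
  rintro ⟨m, r⟩ ⟨m', r'⟩ h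
  simp only [residueIndex, Fin.cons_inj] at h
  rw [h.2.1, h.2.2]

theorem tsum_residue_eq_tsum_residueIndex {k nn : ℕ} (hk : 1 ≤ k) (c : Fin (nn + 2) → ℂ) :
    ∑' m, (if ∑ j, laurentDegree nn j * m j - 2 * k = -1 then expCoeff c m else 0) =
      ∑' p, expCoeff c (residueIndex k nn p) := by
  rw [← (residueIndex_injective k nn).tsum_eq]
  · exact tsum_congr fun p => if_pos ((laurentDegree_residue_iff hk _ _ _).2 rfl)
  · intro m hm
    induction m using Fin.consCases with | cons a m
    induction m using Fin.consCases with | cons r m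
    rw [Function.mem_support, ne_eq, ite_eq_right_iff, Classical.not_imp,
      laurentDegree_residue_iff hk] at hm
    exact ⟨(m, r), by rw [residueIndex, hm.1]⟩

theorem pow_mul_tsum_eq_rpow_mul_besselI (ν : ℕ) {x y : ℝ} (hx : 0 ≤ x) (hy : 0 < y) :
    x ^ ν * ∑' r : ℕ, (x * y) ^ r / ((r.factorial : ℝ) * ((ν + r).factorial : ℝ)) =
      Real.rpow (x / y) ((ν : ℝ) / 2) * besselI ν (2 * √(x * y)) := by
  have hxy : 0 ≤ x * y := mul_nonneg hx hy.le
  have hsqrt : √(x / y) * √(x * y) = x := by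
    rw [← Real.sqrt_mul (div_nonneg hx hy.le), show x / y * (x * y) = x * x by field_simp,
      Real.sqrt_mul_self hx]
  have hhalf : 2 * √(x * y) / 2 = √(x * y) := by ring
  simp only [besselI, Real.rpow_eq_pow, Real.rpow_div_two_eq_sqrt _ (div_nonneg hx hy.le),
    Real.rpow_natCast, hhalf, pow_mul, Real.sq_sqrt hxy, ← mul_assoc, ← mul_pow, hsqrt]

/-- Here `n = nn + 1`, `t₁ = t 0` and `t_(j+2) = t j.succ`. -/
theorem contour_integral_bessel (k nn : ℕ) (hk : 1 ≤ k) (L : ℂ) (t : Fin (nn + 1) → ℂ) :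
    (Summable fun m : Fin nn → ℕ =>
      ‖(∏ j, t j.succ ^ m j / ((m j).factorial : ℂ)) * L ^ nuIdx k nn m *
        ∑' r : ℕ, (L * t 0) ^ r / ((r.factorial : ℂ) * ((nuIdx k nn m + r).factorial : ℂ))‖) ∧
    ((2 * (Real.pi : ℂ) * Complex.I)⁻¹ *
        circleIntegral
          (fun w : ℂ =>
            Complex.exp (L * w + ∑ j : Fin (nn + 1), t j / w ^ ((j : ℕ) + 1)) / w ^ (2 * k))
          0 1 =
      ∑' m : Fin nn → ℕ,
        (∏ j, t j.succ ^ m j / ((m j).factorial : ℂ)) * L ^ nuIdx k nn m *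
          ∑' r : ℕ, (L * t 0) ^ r / ((r.factorial : ℂ) * ((nuIdx k nn m + r).factorial : ℂ))) ∧
    (∀ (Lr t1 : ℝ), 0 < Lr → 0 < t1 → ∀ m : Fin nn → ℕ,
      Lr ^ nuIdx k nn m *
          ∑' r : ℕ, (Lr * t1) ^ r / ((r.factorial : ℝ) * ((nuIdx k nn m + r).factorial : ℝ)) =
        Real.rpow (Lr / t1) ((nuIdx k nn m : ℝ) / 2) *
          besselI (nuIdx k nn m) (2 * Real.sqrt (Lr * t1))) := by
  have hsum : Summable fun p => ‖expCoeff (Fin.cons L t) (residueIndex k nn p)‖ :=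
    (summable_norm_expCoeff _).comp_injective (residueIndex_injective k nn)
  have hfiber (m : Fin nn → ℕ) :
      ∑' r, expCoeff (Fin.cons L t) (residueIndex k nn (m, r)) =
        (∏ j, t j.succ ^ m j / ((m j).factorial : ℂ)) * L ^ nuIdx k nn m *
          ∑' r : ℕ, (L * t 0) ^ r / ((r.factorial : ℂ) * ((nuIdx k nn m + r).factorial : ℂ)) := by
    simp only [residueIndex, expCoeff_cons_cons, tsum_mul_left]
  refine ⟨?_, ?_, fun Lr t1 hL ht m => pow_mul_tsum_eq_rpow_mul_besselI _ hL.le ht⟩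
  · refine hsum.prod.of_nonneg_of_le (fun _ => norm_nonneg _) fun m => ?_
    rw [← hfiber]
    exact norm_tsum_le_tsum_norm (hsum.prod_factor m)
  · rw [circleIntegral_exp_div_pow_eq_tsum, inv_mul_cancel_left₀ Complex.two_pi_I_ne_zero,
      tsum_residue_eq_tsum_residueIndex hk,
      hsum.of_norm.tsum_prod' fun m => (hsum.prod_factor m).of_norm]
    exact tsum_congr hfiber
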